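/- arXiv:hep-th/0304254 — 2 statements merged into one kernel-verified Lean document; each statement's English description precedes it below -/
import Mathlib

section
/- Let k > 2 be real and let j, m, M, h be real numbers with j > 0, j < k/2, M ≥ 0, −j + m + M ≥ 0, and h ≥ 0. Then the coset weight h^K := −j(j−1)/(k−2) + M + m²/k + h is strictly positive. In particular, the algebraic identity −j(j−1)/(k−2) + M + m²/k = 2j(k/2−j)/(k(k−2)) + (2M/k)(k/2−j) + (2j/k)(−j+m+M) + (j−m)²/k holds. -/
/-- Positivity of the coset weight `h^K = −j(j−1)/(k−2) + M + m²/k + h` for the discrete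
series under the spin bound `0 < j < k/2`, together with the underlying algebraic identity. -/
theorem stmt4 (k j m M h : ℝ) (hk : 2 < k) (hj : 0 < j) (hjk : j < k / 2)
    (hM : 0 ≤ M) (hjmM : 0 ≤ -j + m + M) (hh : 0 ≤ h) :
    0 < -(j * (j - 1)) / (k - 2) + M + m ^ 2 / k + h ∧
    -(j * (j - 1)) / (k - 2) + M + m ^ 2 / k
      = 2 * j * (k / 2 - j) / (k * (k - 2)) + (2 * M / k) * (k / 2 - j)
        + (2 * j / k) * (-j + m + M) + (j - m) ^ 2 / k := by
  have hk0 : (0:ℝ) < k := by linarith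
  have hk2 : (0:ℝ) < k - 2 := by linarith
  have hid : -(j * (j - 1)) / (k - 2) + M + m ^ 2 / k
      = 2 * j * (k / 2 - j) / (k * (k - 2)) + (2 * M / k) * (k / 2 - j)
        + (2 * j / k) * (-j + m + M) + (j - m) ^ 2 / k := by
    field_simp
    ring
  refine ⟨?_, hid⟩
  have h1 : 0 < 2 * j * (k / 2 - j) / (k * (k - 2)) :=
    div_pos (by nlinarith) (by positivity)
  have h2 : 0 ≤ (2 * M / k) * (k / 2 - j) :=
    mul_nonneg (by positivity) (by linarith)
  have h3 : 0 ≤ (2 * j / k) * (-j + m + M) :=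
    mul_nonneg (by positivity) hjmM
  have h4 : 0 ≤ (j - m) ^ 2 / k := by positivity
  linarith [hid]
end

section
/- (Gauss identity / c=1 twisted character decomposition) As formal power series in x, ∏_{m=1}^∞ (1 − x^{2m−1})^{-1} = (∏_{m=1}^∞ (1 − x^{2m})^{-1}) · ∑_{n=0}^∞ x^{n(n+1)/2}. Equivalently, ∑_{n=0}^∞ x^{n(n+1)/2} = ∏_{m=1}^∞ (1 − x^{2m})/(1 − x^{2m−1}). -/
open PowerSeries Finset

/-!
The finite Jacobi triple product at `z = 1`, with the limit taken `X`-adically. By the `q`-binomial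
theorem, `∏_{i<2n} (t + q^i) = ∑_{a+b=2n} [2n, b]_q q^{a(a-1)/2} t^b`. At `t = q^{n-1}` the left
side is `q^c · 2 (-q;q)_{n-1} (-q;q)_n`, and the exponents on the right are `c + j(j+1)/2`, with
`j` running over `0, …, n` and again over `0, …, n-1`. Since
`[a+b, b]_q (q;q)_a (q;q)_b = (q;q)_{a+b}` and `(q;q)_s ≡ (q;q)_r mod q^{r+1}` for `r ≤ s`, each
term is `≡ q^{c + j(j+1)/2} / (q;q)_n` modulo `q^{c+n}`, so
`(-q;q)_n² (q;q)_n ≡ ∑_{j<n} q^{j(j+1)/2} mod q^n`. Multiplying by `(q;q²)_n` and using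
`(-q;q)_n (q;q)_n = (q²;q²)_n` and `(q;q²)_n (q²;q²)_n = (q;q)_{2n} ≡ (q;q)_n` gives
`(q;q²)_n ∑_{j<n} q^{j(j+1)/2} ≡ (q²;q²)_n mod q^n`.
-/

section QBinomial

variable {R : Type*} [CommRing R] (q : R)

/-- `(q; q)_n` -/
def qPochhammer (n : ℕ) : R := ∏ i ∈ range n, (1 - q ^ (i + 1))

/-- `(-q; q)_n` -/
def qPochhammerNeg (n : ℕ) : R := ∏ i ∈ range n, (1 + q ^ (i + 1))

lemma qPochhammer_succ (n : ℕ) :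
    qPochhammer q (n + 1) = qPochhammer q n * (1 - q ^ (n + 1)) :=
  prod_range_succ _ _

lemma qPochhammer_two_mul (n : ℕ) :
    qPochhammer q (2 * n) =
      (∏ i ∈ range n, (1 - q ^ (2 * i + 1))) * ∏ i ∈ range n, (1 - q ^ (2 * (i + 1))) := by
  induction n with
  | zero => simp [qPochhammer]
  | succ n ih =>
    rw [show 2 * (n + 1) = 2 * n + 1 + 1 by ring, qPochhammer_succ, qPochhammer_succ, ih,
      prod_range_succ, prod_range_succ]
    ring

lemma qPochhammerNeg_mul_qPochhammer (n : ℕ) :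
    qPochhammerNeg q n * qPochhammer q n = ∏ i ∈ range n, (1 - q ^ (2 * (i + 1))) := by
  rw [qPochhammerNeg, qPochhammer, ← prod_mul_distrib]
  exact prod_congr rfl fun i _ ↦ by ring

/-- For `a + b = m`, the coefficient of `X^b` is `q^{a(a-1)/2}` times the Gaussian binomial
`[m, b]_q` (the `q`-binomial theorem). -/
noncomputable def qBinomialPoly (m : ℕ) : Polynomial R :=
  ∏ i ∈ range m, (Polynomial.X + Polynomial.C (q ^ i))

lemma natDegree_X_add_C_le (a : R) : (Polynomial.X + Polynomial.C a).natDegree ≤ 1 :=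
  (Polynomial.natDegree_add_le _ _).trans (by simp [Polynomial.natDegree_X_le])

lemma natDegree_qBinomialPoly_le (m : ℕ) : (qBinomialPoly q m).natDegree ≤ m :=
  (Polynomial.natDegree_prod_le _ _).trans <|
    (sum_le_sum fun i _ ↦ natDegree_X_add_C_le _).trans (by simp)

lemma coeff_qBinomialPoly_self (m : ℕ) : (qBinomialPoly q m).coeff m = 1 := by
  have h := Polynomial.coeff_prod_of_natDegree_le (range m)
    (fun i ↦ Polynomial.X + Polynomial.C (q ^ i)) 1 fun i _ ↦ natDegree_X_add_C_le (q ^ i)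
  rw [card_range, mul_one] at h
  rw [qBinomialPoly, h]
  exact prod_eq_one fun i _ ↦ by
    rw [Polynomial.coeff_add, Polynomial.coeff_X_one, Polynomial.coeff_C_succ, add_zero]

lemma coeff_qBinomialPoly_zero (m : ℕ) : (qBinomialPoly q m).coeff 0 = q ^ m.choose 2 := by
  simp only [qBinomialPoly, Polynomial.coeff_zero_eq_eval_zero, Polynomial.eval_prod,
    Polynomial.eval_add, Polynomial.eval_X, Polynomial.eval_C, zero_add]
  rw [prod_pow_eq_pow_sum, sum_range_id, Nat.choose_two_right]

lemma coeff_qBinomialPoly_succ_succ (m j : ℕ) :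
    (qBinomialPoly q (m + 1)).coeff (j + 1) =
      (qBinomialPoly q m).coeff j + q ^ m * (qBinomialPoly q m).coeff (j + 1) := by
  rw [qBinomialPoly, prod_range_succ, ← qBinomialPoly, mul_add, Polynomial.coeff_add,
    Polynomial.coeff_mul_X, Polynomial.coeff_mul_C, mul_comm]

lemma coeff_qBinomialPoly_mul_qPochhammer (a b : ℕ) :
    (qBinomialPoly q (a + b)).coeff b * (qPochhammer q a * qPochhammer q b) =
      q ^ a.choose 2 * qPochhammer q (a + b) := by
  induction a generalizing b with
  | zero => simp [coeff_qBinomialPoly_self, qPochhammer]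
  | succ a iha =>
    induction b with
    | zero => simp [coeff_qBinomialPoly_zero, qPochhammer]
    | succ b ihb =>
      have h := iha (b + 1)
      rw [show a + 1 + b = a + b + 1 by ring] at ihb
      rw [show a + (b + 1) = a + b + 1 by ring] at h
      rw [show a + 1 + (b + 1) = a + b + 1 + 1 by ring, coeff_qBinomialPoly_succ_succ,
        qPochhammer_succ q (a + b + 1)]
      rw [qPochhammer_succ q a, qPochhammer_succ q b, Nat.choose_succ_succ',
        Nat.choose_one_right] at *
      linear_combination (1 - q ^ (b + 1)) * ihb + q ^ (a + b + 1) * (1 - q ^ (a + 1)) * h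

lemma prod_range_pow_add_pow (N : ℕ) :
    ∏ i ∈ range (2 * N + 2), (q ^ N + q ^ i) =
      q ^ ((N + 1).choose 2 + N * (N + 1)) *
        (2 * qPochhammerNeg q N * qPochhammerNeg q (N + 1)) := by
  have h₁ : ∏ i ∈ range (N + 1), (1 + q ^ (N - i)) = 2 * qPochhammerNeg q N := by
    have h := prod_range_reflect (fun i ↦ 1 + q ^ i) (N + 1)
    rw [Nat.add_sub_cancel] at h
    rw [h, prod_range_succ', pow_zero, one_add_one_eq_two, mul_comm, qPochhammerNeg]
  have h₂ : ∏ i ∈ range (N + 1), (q ^ N + q ^ i) =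
      q ^ (N + 1).choose 2 * (2 * qPochhammerNeg q N) := by
    rw [← h₁, Nat.choose_two_right, ← sum_range_id, ← prod_pow_eq_pow_sum, ← prod_mul_distrib]
    refine prod_congr rfl fun i hi ↦ ?_
    rw [mul_add, mul_one, ← pow_add, Nat.add_sub_cancel' (by simpa [Nat.lt_succ_iff] using hi),
      add_comm]
  have h₃ : ∏ i ∈ range (N + 1), (q ^ N + q ^ (N + 1 + i)) =
      q ^ (N * (N + 1)) * qPochhammerNeg q (N + 1) := by
    rw [qPochhammerNeg, prod_congr rfl fun i _ ↦
        show q ^ N + q ^ (N + 1 + i) = q ^ N * (1 + q ^ (i + 1)) by ring,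
      prod_mul_distrib, prod_const, card_range, ← pow_mul]
  rw [show 2 * N + 2 = N + 1 + (N + 1) by ring, prod_range_add, h₂, h₃, pow_add]
  ring

end QBinomial

lemma sum_range_two_mul_add_one {M : Type*} [AddCommMonoid M] (f : ℕ → M) (n : ℕ) :
    ∑ b ∈ range (2 * n + 1), f b = f 0 + ∑ j ∈ range n, (f (n - j) + f (n + 1 + j)) := by
  rw [sum_range_succ', add_comm, two_mul, sum_range_add, sum_add_distrib,
    ← sum_range_reflect (fun j ↦ f (j + 1)) n]
  congr 2
  · exact sum_congr rfl fun j hj ↦ by rw [mem_range] at hj; congr 1; omega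
  · exact sum_congr rfl fun j _ ↦ by congr 1; omega

section Exponents

lemma le_choose_two_succ (j : ℕ) : j ≤ (j + 1).choose 2 := by
  rw [Nat.choose_succ_succ', Nat.choose_one_right]; omega

lemma choose_two_add_mul_sub {N j : ℕ} (hj : j ≤ N + 1) :
    (N + 1 + j).choose 2 + N * (N + 1 - j) =
      (N + 1).choose 2 + N * (N + 1) + (j + 1).choose 2 := by
  rw [← Nat.cast_inj (R := ℚ)]
  push_cast [Nat.cast_sub hj, Nat.cast_choose_two]
  ring

lemma choose_two_sub_add_mul {N j : ℕ} (hj : j ≤ N) :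
    (N - j).choose 2 + N * (N + 2 + j) = (N + 1).choose 2 + N * (N + 1) + (j + 1).choose 2 := by
  rw [← Nat.cast_inj (R := ℚ)]
  push_cast [Nat.cast_sub hj, Nat.cast_choose_two]
  ring

lemma add_le_choose_two_two_mul (N : ℕ) :
    (N + 1).choose 2 + N * (N + 1) + (N + 1) ≤ (2 * N + 2).choose 2 := by
  rw [← Nat.cast_le (α := ℚ)]
  push_cast [Nat.cast_choose_two]
  nlinarith

end Exponents

section Congruence

variable {R : Type*} [CommRing R]

lemma prod_range_smodEq_prod_range {I : Ideal R} {f : ℕ → R} {r s : ℕ} (hrs : r ≤ s)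
    (hf : ∀ i, r ≤ i → f i ≡ 1 [SMOD I]) : ∏ i ∈ range s, f i ≡ ∏ i ∈ range r, f i [SMOD I] := by
  obtain ⟨k, rfl⟩ := Nat.exists_eq_add_of_le hrs
  rw [prod_range_add]
  conv_rhs => rw [← mul_one (∏ i ∈ range r, f i)]
  exact SModEq.rfl.mul (by simpa using SModEq.prod fun i _ ↦ hf (r + i) (by omega))

lemma pow_smodEq_zero (q : R) {j k : ℕ} (h : k ≤ j) : q ^ j ≡ 0 [SMOD Ideal.span {q ^ k}] :=
  SModEq.zero.2 (Ideal.mem_span_singleton.2 (pow_dvd_pow q h))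

lemma SModEq.pow_mul {q x y : R} {k : ℕ} (h : x ≡ y [SMOD Ideal.span {q ^ k}]) (e : ℕ) :
    q ^ e * x ≡ q ^ e * y [SMOD Ideal.span {q ^ (e + k)}] := by
  rw [SModEq.sub_mem, Ideal.mem_span_singleton] at h ⊢
  rw [← mul_sub, pow_add]
  exact mul_dvd_mul_left _ h

lemma SModEq.of_span_pow_le {q x y : R} {j k : ℕ} (h : x ≡ y [SMOD Ideal.span {q ^ k}])
    (hjk : j ≤ k) : x ≡ y [SMOD Ideal.span {q ^ j}] :=
  h.mono (Ideal.span_singleton_le_span_singleton.2 (pow_dvd_pow q hjk))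

lemma qPochhammer_smodEq (q : R) {r s : ℕ} (hrs : r ≤ s) :
    qPochhammer q s ≡ qPochhammer q r [SMOD Ideal.span {q ^ (r + 1)}] :=
  prod_range_smodEq_prod_range hrs fun i hi ↦ by
    simpa using (SModEq.rfl (x := (1 : R))).sub (pow_smodEq_zero q (by omega : r + 1 ≤ i + 1))

lemma qPochhammerNeg_smodEq (q : R) {r s : ℕ} (hrs : r ≤ s) :
    qPochhammerNeg q s ≡ qPochhammerNeg q r [SMOD Ideal.span {q ^ (r + 1)}] :=
  prod_range_smodEq_prod_range hrs fun i hi ↦ by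
    simpa using (SModEq.rfl (x := (1 : R))).add (pow_smodEq_zero q (by omega : r + 1 ≤ i + 1))

end Congruence

section PowerSeries

variable {R : Type*} [CommRing R]

lemma smodEq_span_X_pow_iff {x y : R⟦X⟧} {n : ℕ} :
    x ≡ y [SMOD Ideal.span {X ^ n}] ↔ ∀ m < n, coeff m x = coeff m y := by
  simp only [SModEq.sub_mem, Ideal.mem_span_singleton, X_pow_dvd_iff, map_sub, sub_eq_zero]

lemma SModEq.of_X_pow_mul {x y : R⟦X⟧} {c n : ℕ}
    (h : X ^ c * x ≡ X ^ c * y [SMOD Ideal.span {X ^ (c + n)}]) :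
    x ≡ y [SMOD Ideal.span {X ^ n}] := by
  rw [smodEq_span_X_pow_iff] at h ⊢
  intro m hm
  simpa [coeff_X_pow_mul'] using h (m + c) (by omega)

lemma isUnit_qPochhammer_X (n : ℕ) : IsUnit (qPochhammer (X : R⟦X⟧) n) := by
  rw [isUnit_iff_constantCoeff]
  simp [qPochhammer, map_prod]

lemma coeff_qBinomialPoly_mul_qPochhammer_smodEq {m a b r : ℕ} (N n : ℕ) (hab : a + b = m)
    (ha : r ≤ a) (hb : r ≤ b) (hn : r ≤ n) :
    (qBinomialPoly (X : R⟦X⟧) m).coeff b * (X ^ N) ^ b * qPochhammer X n ≡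
      X ^ (a.choose 2 + N * b) [SMOD Ideal.span {X ^ (a.choose 2 + N * b + r + 1)}] := by
  subst hab
  obtain ⟨u, hu⟩ := (isUnit_qPochhammer_X (R := R) a).mul (isUnit_qPochhammer_X b)
  have hx : (qBinomialPoly (X : R⟦X⟧) (a + b)).coeff b * (u : R⟦X⟧) =
      X ^ a.choose 2 * qPochhammer X (a + b) := by
    rw [hu]; exact coeff_qBinomialPoly_mul_qPochhammer X a b
  have hW : qPochhammer X (a + b) * qPochhammer X n ≡ u [SMOD Ideal.span {(X : R⟦X⟧) ^ (r + 1)}] :=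
    hu ▸ ((qPochhammer_smodEq X (by omega)).mul (qPochhammer_smodEq X hn)).trans
      ((qPochhammer_smodEq X ha).mul (qPochhammer_smodEq X hb)).symm
  have hlhs : (qBinomialPoly (X : R⟦X⟧) (a + b)).coeff b * (X ^ N) ^ b * qPochhammer X n =
      X ^ (a.choose 2 + N * b) *
        (((u⁻¹ : R⟦X⟧ˣ) : R⟦X⟧) * (qPochhammer X (a + b) * qPochhammer X n)) := by
    rw [pow_add, pow_mul]
    linear_combination ((X : R⟦X⟧) ^ N) ^ b * qPochhammer X n * ((u⁻¹ : R⟦X⟧ˣ) : R⟦X⟧) * hx -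
      (qBinomialPoly (X : R⟦X⟧) (a + b)).coeff b * (X ^ N) ^ b * qPochhammer X n * u.mul_inv
  have h := ((SModEq.rfl (x := ((u⁻¹ : R⟦X⟧ˣ) : R⟦X⟧))).mul hW).pow_mul (a.choose 2 + N * b)
  rw [Units.inv_mul, mul_one] at h
  rw [hlhs]
  exact h

lemma prod_range_X_pow_add_X_pow_mul_qPochhammer_smodEq (N : ℕ) :
    (∏ i ∈ range (2 * N + 2), ((X : R⟦X⟧) ^ N + X ^ i)) * qPochhammer X (N + 1) ≡
      X ^ ((N + 1).choose 2 + N * (N + 1)) * (2 * ∑ j ∈ range (N + 1), X ^ ((j + 1).choose 2))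
      [SMOD Ideal.span {X ^ ((N + 1).choose 2 + N * (N + 1) + (N + 1))}] := by
  set c := (N + 1).choose 2 + N * (N + 1)
  have heval : ∏ i ∈ range (2 * N + 2), ((X : R⟦X⟧) ^ N + X ^ i) =
      ∑ b ∈ range (2 * (N + 1) + 1),
        (qBinomialPoly (X : R⟦X⟧) (2 * N + 2)).coeff b * (X ^ N) ^ b := by
    rw [← Polynomial.eval_eq_sum_range' ((natDegree_qBinomialPoly_le _ _).trans_lt (by omega)),
      qBinomialPoly, Polynomial.eval_prod]
    simp [add_comm]
  have hrhs : X ^ c * (2 * ∑ j ∈ range (N + 1), (X : R⟦X⟧) ^ ((j + 1).choose 2)) =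
      0 + ∑ j ∈ range (N + 1), (X ^ (c + (j + 1).choose 2) + X ^ (c + (j + 1).choose 2)) := by
    simp only [zero_add, ← two_mul, mul_sum, pow_add]
    exact sum_congr rfl fun _ _ ↦ by ring
  rw [heval, sum_range_two_mul_add_one, add_mul, sum_mul, hrhs]
  simp_rw [add_mul]
  refine SModEq.add ?_ (SModEq.sum fun j hj ↦ SModEq.add ?_ ?_)
  · rw [coeff_qBinomialPoly_zero, pow_zero, mul_one, ← zero_mul (qPochhammer (X : R⟦X⟧) (N + 1))]
    exact (pow_smodEq_zero X (add_le_choose_two_two_mul N)).mul SModEq.rfl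
  · rw [mem_range] at hj
    have h := coeff_qBinomialPoly_mul_qPochhammer_smodEq (R := R) N (N + 1)
      (show N + 1 + j + (N + 1 - j) = 2 * N + 2 by omega) (r := N + 1 - j) (by omega) le_rfl
      (by omega)
    rw [choose_two_add_mul_sub hj.le] at h
    exact h.of_span_pow_le (by have := le_choose_two_succ j; omega)
  · rw [mem_range] at hj
    have h := coeff_qBinomialPoly_mul_qPochhammer_smodEq (R := R) N (N + 1)
      (show N - j + (N + 1 + 1 + j) = 2 * N + 2 by omega) (r := N - j) le_rfl (by omega)
      (by omega)
    rw [show N + 1 + 1 + j = N + 2 + j by ring, choose_two_sub_add_mul (by omega)] at h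
    exact h.of_span_pow_le (by have := le_choose_two_succ j; omega)

end PowerSeries

lemma SModEq.of_two_mul {x y : ℤ⟦X⟧} {n : ℕ} (h : 2 * x ≡ 2 * y [SMOD Ideal.span {X ^ n}]) :
    x ≡ y [SMOD Ideal.span {X ^ n}] := by
  rw [smodEq_span_X_pow_iff] at h ⊢
  intro m hm
  have := h m hm
  rw [two_mul, two_mul, map_add, map_add] at this
  omega

lemma prod_one_sub_X_pow_odd_mul_sum_smodEq (N : ℕ) :
    (∏ i ∈ range (N + 1), (1 - (X : ℤ⟦X⟧) ^ (2 * i + 1))) *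
        ∑ j ∈ range (N + 1), X ^ ((j + 1).choose 2) ≡
      ∏ i ∈ range (N + 1), (1 - X ^ (2 * (i + 1))) [SMOD Ideal.span {X ^ (N + 1)}] := by
  have hJ := prod_range_X_pow_add_X_pow_mul_qPochhammer_smodEq (R := ℤ) N
  rw [prod_range_pow_add_pow, mul_assoc, mul_assoc, mul_assoc] at hJ
  have hHW : qPochhammerNeg (X : ℤ⟦X⟧) N * (qPochhammerNeg X (N + 1) * qPochhammer X (N + 1)) ≡
      ∑ j ∈ range (N + 1), X ^ ((j + 1).choose 2) [SMOD Ideal.span {X ^ (N + 1)}] :=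
    hJ.of_X_pow_mul.of_two_mul
  have hH := (qPochhammerNeg_smodEq (X : ℤ⟦X⟧) N.le_succ).symm
  have hW : qPochhammer (X : ℤ⟦X⟧) (2 * (N + 1)) ≡ qPochhammer X (N + 1)
      [SMOD Ideal.span {X ^ (N + 1)}] :=
    (qPochhammer_smodEq X (by omega : N + 1 ≤ 2 * (N + 1))).of_span_pow_le (N + 1).le_succ
  rw [← qPochhammerNeg_mul_qPochhammer]
  calc _ ≡ (∏ i ∈ range (N + 1), (1 - (X : ℤ⟦X⟧) ^ (2 * i + 1))) *
          (qPochhammerNeg X N * (qPochhammerNeg X (N + 1) * qPochhammer X (N + 1)))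
          [SMOD Ideal.span {(X : ℤ⟦X⟧) ^ (N + 1)}] := SModEq.mul (SModEq.refl _) hHW.symm
    _ ≡ (∏ i ∈ range (N + 1), (1 - (X : ℤ⟦X⟧) ^ (2 * i + 1))) *
          (qPochhammerNeg X (N + 1) * (qPochhammerNeg X (N + 1) * qPochhammer X (N + 1)))
          [SMOD Ideal.span {(X : ℤ⟦X⟧) ^ (N + 1)}] :=
        SModEq.mul (SModEq.refl _) (hH.mul (SModEq.refl _))
    _ = qPochhammerNeg X (N + 1) * qPochhammer (X : ℤ⟦X⟧) (2 * (N + 1)) := by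
          rw [qPochhammer_two_mul, ← qPochhammerNeg_mul_qPochhammer]; ring
    _ ≡ _ [SMOD Ideal.span {(X : ℤ⟦X⟧) ^ (N + 1)}] := SModEq.mul (SModEq.refl _) hW

/-- Gauss identity underlying the `c = 1`, `h = 1/16` twisted-sector character decomposition:
as formal power series in `x`,
`∑_{n≥0} x^{n(n+1)/2} · ∏_{m≥1} (1 − x^{2m−1}) = ∏_{m≥1} (1 − x^{2m})`,
i.e. `∑_{n≥0} x^{n(n+1)/2} = ∏_{m≥1} (1 − x^{2m})/(1 − x^{2m−1})`.  Stated coefficientwise: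
factors and summands of degree `> d` do not contribute to the coefficient of `x^d`. -/
theorem stmt10 : ∀ d : ℕ,
    PowerSeries.coeff (R := ℤ) d
      ((∑ n ∈ range (d + 1), (PowerSeries.X : PowerSeries ℤ) ^ (n * (n + 1) / 2)) *
        ∏ m ∈ range (d + 1), (1 - (PowerSeries.X : PowerSeries ℤ) ^ (2 * (m + 1) - 1)))
    = PowerSeries.coeff (R := ℤ) d
        (∏ m ∈ range (d + 1), (1 - (PowerSeries.X : PowerSeries ℤ) ^ (2 * (m + 1)))) := by
  intro d
  have hS : ∑ n ∈ range (d + 1), (X : ℤ⟦X⟧) ^ (n * (n + 1) / 2) =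
      ∑ j ∈ range (d + 1), X ^ ((j + 1).choose 2) :=
    sum_congr rfl fun n _ ↦ by rw [Nat.choose_two_right, Nat.add_sub_cancel, mul_comm]
  have hOdd : ∏ m ∈ range (d + 1), (1 - (X : ℤ⟦X⟧) ^ (2 * (m + 1) - 1)) =
      ∏ i ∈ range (d + 1), (1 - X ^ (2 * i + 1)) :=
    prod_congr rfl fun m _ ↦ by rw [show 2 * (m + 1) - 1 = 2 * m + 1 by omega]
  rw [hS, hOdd, mul_comm]
  exact smodEq_span_X_pow_iff.1 (prod_one_sub_X_pow_odd_mul_sum_smodEq d) d d.lt_succ_self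
end
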